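/- Let a and b be terms, φ and ψ substitutions, and ρ a renaming such that vars(aρ) ∩ vars(b) = ∅ and vars(φρ) ∩ vars(ψ) = ∅. If the terms (aρ)(φρ) and bψ unify, then aρ and b unify. -/

import Mathlib

open scoped Classical

/-- First-order terms over a set `F` of function symbols, with variables drawn from `ℕ`. -/
inductive Tm (F : Type) : Type
  | var : ℕ → Tm F
  | app : F → List (Tm F) → Tm F

namespace Tm

/-- Applying a substitution (a map from variables to terms) to a term. -/
def subst {F : Type} : Tm F → (ℕ → Tm F) → Tm F
  | var x, θ => θ x
  | app f ts, θ => app f (ts.attach.map fun t => t.1.subst θ)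
  decreasing_by
    have := List.sizeOf_lt_of_mem t.2
    simp only [Tm.app.sizeOf_spec]
    omega

/-- The set of variables occurring in a term. -/
def vars {F : Type} : Tm F → Set ℕ
  | var x => {x}
  | app _ ts => ⋃ t : {x // x ∈ ts}, t.1.vars
  decreasing_by
    have := List.sizeOf_lt_of_mem t.2
    simp only [Tm.app.sizeOf_spec]
    omega

/-- A term is ground if it contains no variables. -/
def Ground {F : Type} (t : Tm F) : Prop := t.vars = ∅

end Tm

/-- Substitutions are maps from variables to terms (finite support is
    imposed separately by `Subst.IsSubst`). -/
abbrev Subst (F : Type) := ℕ → Tm F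

namespace Subst

variable {F : Type}

/-- The domain of a substitution. -/
def dom (θ : Subst F) : Set ℕ := {x | θ x ≠ Tm.var x}

/-- A genuine substitution is the identity on all but finitely many variables. -/
def IsSubst (θ : Subst F) : Prop := (dom θ).Finite

/-- The range variables of a substitution. -/
def rang (θ : Subst F) : Set ℕ := ⋃ x ∈ dom θ, (θ x).vars

/-- vars(θ) = dom(θ) ∪ rang(θ). -/
def svars (θ : Subst F) : Set ℕ := dom θ ∪ rang θ

/-- Composition: `X (comp θ σ) = (X θ) σ`. -/
def comp (θ σ : Subst F) : Subst F := fun x => (θ x).subst σ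

/-- Restriction of a substitution to a set of variables. -/
noncomputable def restrict (θ : Subst F) (V : Set ℕ) : Subst F :=
  fun x => if x ∈ V then θ x else Tm.var x

/-- A renaming is a substitution mapping its domain injectively to variables. -/
def IsRenaming (ρ : Subst F) : Prop :=
  IsSubst ρ ∧ (∀ x, ∃ y, ρ x = Tm.var y) ∧ Set.InjOn ρ (dom ρ)

/-- Two substitutions are equivalent modulo renaming. -/
def EquivMod (σ θ : Subst F) : Prop :=
  ∃ δ ρ, IsRenaming δ ∧ IsRenaming ρ ∧ σ = comp θ δ ∧ θ = comp σ ρ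

/-- `μ` is a unifier of the terms `s` and `t`. -/
def Unifier (μ : Subst F) (s t : Tm F) : Prop :=
  IsSubst μ ∧ s.subst μ = t.subst μ

/-- Two terms unify if they have a unifier. -/
def Unify (s t : Tm F) : Prop := ∃ μ, Unifier μ s t

/-- `μ` is a most general unifier of the terms `s` and `t`. -/
def IsMGU (μ : Subst F) (s t : Tm F) : Prop :=
  Unifier μ s t ∧ ∀ τ, Unifier τ s t → ∃ δ, IsSubst δ ∧ τ = comp μ δ

/-- The image of a set of variables under a renaming: `Vρ = {Xρ | X ∈ V}`. -/
def varImage (ρ : Subst F) (V : Set ℕ) : Set ℕ := {y | ∃ x ∈ V, ρ x = Tm.var y}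

/-- The substitution `φρ`, whose bindings are `{Xρ ↦ tρ | X ↦ t a binding of φ}`. -/
noncomputable def renameSubst (φ ρ : Subst F) : Subst F := fun y =>
  if h : ∃ x, x ∈ dom φ ∧ ρ x = Tm.var y then (φ h.choose).subst ρ else Tm.var y

/-- `μ` is a unifier of a set of equations (pairs of terms). -/
def EqUnifier (μ : Subst F) (E : Set (Tm F × Tm F)) : Prop :=
  IsSubst μ ∧ ∀ e ∈ E, e.1.subst μ = e.2.subst μ

/-- `μ` is a most general unifier of a set of equations. -/
def EqIsMGU (μ : Subst F) (E : Set (Tm F × Tm F)) : Prop :=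
  EqUnifier μ E ∧ ∀ τ, EqUnifier τ E → ∃ δ, IsSubst δ ∧ τ = comp μ δ

/-- Applying a substitution to a set of equations. -/
def eqSubst (E : Set (Tm F × Tm F)) (θ : Subst F) : Set (Tm F × Tm F) :=
  (fun e => (e.1.subst θ, e.2.subst θ)) '' E

/-- `downwards(E, S) = S ∪ ⋃ {vars(t) | (X = t) ∈ E with X ∈ S}`. -/
def downwards (E : Set (Tm F × Tm F)) (S : Set ℕ) : Set ℕ :=
  S ∪ {y | ∃ x t, (Tm.var x, t) ∈ E ∧ x ∈ S ∧ y ∈ Tm.vars t}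

/-- `upwards(E, S) = S ∪ {X | (X = t) ∈ E and vars(t) ⊆ S}`. -/
def upwards (E : Set (Tm F × Tm F)) (S : Set ℕ) : Set ℕ :=
  S ∪ {x | ∃ t, (Tm.var x, t) ∈ E ∧ Tm.vars t ⊆ S}

end Subst

namespace Tm

variable {F : Type}

lemma subst_var (x : ℕ) (θ : Subst F) : (var x).subst θ = θ x := by rw [subst]

lemma subst_app (f : F) (ts : List (Tm F)) (θ : Subst F) :
    (app f ts).subst θ = app f (ts.map (·.subst θ)) := by
  rw [subst]
  simp

lemma vars_var (x : ℕ) : (var x : Tm F).vars = {x} := by rw [vars]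

lemma vars_subset_app {f : F} {ts : List (Tm F)} {t : Tm F} (ht : t ∈ ts) :
    t.vars ⊆ (app f ts).vars := by
  rw [vars]
  exact Set.subset_iUnion_of_subset ⟨t, ht⟩ subset_rfl

lemma vars_finite : ∀ t : Tm F, t.vars.Finite
  | var x => by rw [vars_var]; exact Set.finite_singleton x
  | app f ts => by
    rw [vars]
    exact Set.finite_iUnion fun t => vars_finite t.1
  termination_by t => sizeOf t
  decreasing_by
    have := List.sizeOf_lt_of_mem t.2
    simp only [Tm.app.sizeOf_spec]
    omega

lemma subst_subst : ∀ (t : Tm F) (θ σ : Subst F),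
    (t.subst θ).subst σ = t.subst (Subst.comp θ σ)
  | var x, θ, σ => by rw [subst_var, subst_var]; rfl
  | app f ts, θ, σ => by
    rw [subst_app, subst_app, subst_app, List.map_map]
    exact congrArg _ (List.map_congr_left fun t _ => subst_subst t θ σ)
  termination_by t => sizeOf t
  decreasing_by
    have := List.sizeOf_lt_of_mem ‹t ∈ ts›
    simp only [Tm.app.sizeOf_spec]
    omega

lemma subst_congr : ∀ {t : Tm F} {θ σ : Subst F},
    (∀ x ∈ t.vars, θ x = σ x) → t.subst θ = t.subst σ
  | var x, θ, σ, h => by rw [subst_var, subst_var]; exact h x (by rw [vars_var]; rfl)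
  | app f ts, θ, σ, h => by
    rw [subst_app, subst_app]
    exact congrArg _ (List.map_congr_left fun t ht =>
      subst_congr fun x hx => h x (vars_subset_app ht hx))
  termination_by t => sizeOf t
  decreasing_by
    have := List.sizeOf_lt_of_mem ht
    simp only [Tm.app.sizeOf_spec]
    omega

end Tm

namespace Subst

variable {F : Type}

lemma dom_restrict_subset (θ : Subst F) (V : Set ℕ) : dom (restrict θ V) ⊆ V := by
  intro x hx
  by_contra hxV
  exact hx (if_neg hxV)

lemma IsSubst.restrict (θ : Subst F) {V : Set ℕ} (hV : V.Finite) : IsSubst (restrict θ V) :=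
  hV.subset (dom_restrict_subset θ V)

theorem unify_of_subst_eq_of_disjoint {s t : Tm F} {θ σ : Subst F}
    (hst : Disjoint s.vars t.vars) (h : s.subst θ = t.subst σ) : Unify s t := by
  let μ : Subst F := restrict (fun x => if x ∈ s.vars then θ x else σ x) (s.vars ∪ t.vars)
  have hμs : s.subst μ = s.subst θ := Tm.subst_congr fun x hx => by
    simp [μ, restrict, hx]
  have hμt : t.subst μ = t.subst σ := Tm.subst_congr fun x hx => by
    simp [μ, restrict, hx, hst.notMem_of_mem_right hx]
  exact ⟨μ, IsSubst.restrict _ ((Tm.vars_finite s).union (Tm.vars_finite t)), by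
    rw [hμs, hμt, h]⟩

end Subst

theorem stmt1_general {F : Type} (a b : Tm F) (φ ψ ρ : Subst F)
    (hab : (a.subst ρ).vars ∩ b.vars = ∅)
    (hU : Subst.Unify ((a.subst ρ).subst (Subst.renameSubst φ ρ)) (b.subst ψ)) :
    Subst.Unify (a.subst ρ) b := by
  obtain ⟨μ, -, hμ⟩ := hU
  rw [Tm.subst_subst (a.subst ρ), Tm.subst_subst b] at hμ
  exact Subst.unify_of_subst_eq_of_disjoint (Set.disjoint_iff_inter_eq_empty.2 hab) hμ

/-- if `vars(aρ) ∩ vars(b) = ∅`, `vars(φρ) ∩ vars(ψ) = ∅` and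
`(aρ)(φρ)` and `bψ` unify, then `aρ` and `b` unify. -/
theorem stmt1 {F : Type} (a b : Tm F) (φ ψ ρ : Subst F)
    (hφ : Subst.IsSubst φ) (hψ : Subst.IsSubst ψ) (hρ : Subst.IsRenaming ρ)
    (hab : (a.subst ρ).vars ∩ b.vars = ∅)
    (hφψ : Subst.svars (Subst.renameSubst φ ρ) ∩ Subst.svars ψ = ∅)
    (hU : Subst.Unify ((a.subst ρ).subst (Subst.renameSubst φ ρ)) (b.subst ψ)) :
    Subst.Unify (a.subst ρ) b :=
  stmt1_general a b φ ψ ρ hab hU
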